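/- arXiv:2601.18559 — 8 statements merged into one kernel-verified Lean document; each statement's English description precedes it below -/
import Mathlib

section
/- For every integer s ≥ 1, every real number c ≠ 0, and every n ∈ ℕ, one has Q_n^s(e^{c} + √s + e^{-c}) = (e^{-(n+1)c} + √s·(e^{-nc} − e^{nc}) − e^{(n+1)c})/(e^{-c} − e^{c}). -/
open MeasureTheory Polynomial Filter

/-- The orthogonal polynomials `Q_n^s`: `Q_0 = 1`, `Q_1 = X`,
`X * Q_n = Q_{n+1} + √s * Q_n + Q_{n-1}`. -/
noncomputable def Qpoly (s : ℕ) : ℕ → Polynomial ℝ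
  | 0 => 1
  | 1 => Polynomial.X
  | (n + 2) => Polynomial.X * Qpoly s (n + 1)
      - Polynomial.C (Real.sqrt s) * Qpoly s (n + 1) - Qpoly s n

/-- Chebyshev polynomials of the second kind: `P_0 = 1`, `P_1 = X`,
`X * P_n = P_{n+1} + P_{n-1}`. -/
noncomputable def Ppoly : ℕ → Polynomial ℝ
  | 0 => 1
  | 1 => Polynomial.X
  | (n + 2) => Polynomial.X * Ppoly (n + 1) - Ppoly n

/-- The density of the absolutely continuous part of `ν_s`. -/
noncomputable def nuDensity (s : ℕ) (x : ℝ) : ℝ :=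
  Real.sqrt (4 - (x - Real.sqrt s) ^ 2) / (2 * Real.pi * (x * Real.sqrt s + 1))

/-- The free Meixner measure `ν_s`. -/
noncomputable def nuMeas (s : ℕ) : Measure ℝ :=
  volume.withDensity (fun x => ENNReal.ofReal
      (if |x - Real.sqrt s| ≤ 2 then nuDensity s x else 0))
    + ENNReal.ofReal (1 - 1 / (s : ℝ)) • Measure.dirac (-1 / Real.sqrt s)

/-- The density `f_c`. -/
noncomputable def fc (s : ℕ) (c x : ℝ) : ℝ :=
  (Real.exp c + Real.sqrt s) / (Real.exp c + Real.exp (-c) + Real.sqrt s - x)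

/-- The measure `η_c^s = f_c · ν_s + 1_{c<0} ((e^{-c}-e^c)/(e^{-c}+√s)) δ_{e^c+√s+e^{-c}}`. -/
noncomputable def etaMeas (s : ℕ) (c : ℝ) : Measure ℝ :=
  (nuMeas s).withDensity (fun x => ENNReal.ofReal (fc s c x))
    + (if c < 0 then
        ENNReal.ofReal ((Real.exp (-c) - Real.exp c) / (Real.exp (-c) + Real.sqrt s))
      else 0) • Measure.dirac (Real.exp c + Real.sqrt s + Real.exp (-c))

/-- Total variation distance between two Borel measures on `ℝ`. -/
noncomputable def dTV (μ ν : Measure ℝ) : ℝ :=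
  ⨆ A : {A : Set ℝ // MeasurableSet A}, |(μ A.1).toReal - (ν A.1).toReal|


lemma aux_Qpoly_eval (s : ℕ) (A B : ℝ) (hAB : A * B = 1) (n : ℕ) :
    (Qpoly s n).eval (A + Real.sqrt s + B) * (B - A) =
      B ^ (n + 1) + Real.sqrt s * (B ^ n - A ^ n) - A ^ (n + 1) := by
  induction n using Nat.twoStepInduction with
  | zero => simp [Qpoly]
  | one => simp [Qpoly]; ring
  | more n ih1 ih2 =>
    simp only [Qpoly, Polynomial.eval_sub, Polynomial.eval_mul, Polynomial.eval_X,
      Polynomial.eval_C]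
    linear_combination (A + B) * ih2 - ih1 +
      (B ^ (n + 1) + Real.sqrt s * (B ^ n - A ^ n) - A ^ (n + 1)) * hAB

/-- Evaluation of `Q_n^s` at `e^c + √s + e^{-c}` for `c ≠ 0`. -/
theorem stmt2 (s : ℕ) (hs : 1 ≤ s) (c : ℝ) (hc : c ≠ 0) (n : ℕ) :
    (Qpoly s n).eval (Real.exp c + Real.sqrt s + Real.exp (-c)) =
      (Real.exp (-((n + 1) * c)) + Real.sqrt s * (Real.exp (-(n * c)) - Real.exp (n * c))
        - Real.exp ((n + 1) * c)) / (Real.exp (-c) - Real.exp c) := by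
  have hne : Real.exp (-c) - Real.exp c ≠ 0 := by
    intro h
    exact hc (by linarith [Real.exp_injective (sub_eq_zero.mp h)])
  have hAB : Real.exp c * Real.exp (-c) = 1 := by
    rw [← Real.exp_add]; simp
  have e1 : ∀ k : ℕ, Real.exp ((k : ℝ) * c) = Real.exp c ^ k := fun k => Real.exp_nat_mul c k
  have e2 : ∀ k : ℕ, Real.exp (-((k : ℝ) * c)) = Real.exp (-c) ^ k := by
    intro k
    rw [show -((k : ℝ) * c) = (k : ℝ) * (-c) by ring, Real.exp_nat_mul]
  rw [eq_div_iff hne,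
    show ((n : ℝ) + 1) = ((n + 1 : ℕ) : ℝ) by push_cast; ring,
    e1, e2, e1, e2]
  exact aux_Qpoly_eval s _ _ hAB n
end

section
/- For every integer s ≥ 1, every real number c > 0, and every real x with |x − √s| ≤ 2, the series ∑_{n=0}^∞ e^{-cn}·Q_n^s(x) converges and its sum equals (e^{c}+√s)/(e^{c}+e^{-c}+√s−x). -/
open MeasureTheory Polynomial Filter

/-!
The values `u n = Q_n^s(x)` solve the recurrence `u (n+2) = a u (n+1) - u n` with
`a = x - √s`. For `|a| ≤ 2` this recurrence conserves the positive semidefinite quadratic form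
`(u (n+1) - a/2 · u n)² + (1 - a²/4) · u n²`, so `|u n|` grows at most linearly and the series
`∑ rⁿ u n` converges for `0 ≤ r < 1`. Shifting the series twice and using the recurrence shows
that its sum `S` satisfies `S (1 - a r + r²) = u 0 + (u 1 - a u 0) r`; with `r = e^{-c}` this is
the claimed closed form, the denominator being positive since `e^c + e^{-c} > 2 ≥ a`.
-/

section ThreeTermRecurrence

noncomputable def recurrenceEnergy (a : ℝ) (u : ℕ → ℝ) (n : ℕ) : ℝ :=
  (u (n + 1) - a / 2 * u n) ^ 2 + (1 - (a / 2) ^ 2) * u n ^ 2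

variable {a : ℝ} {u : ℕ → ℝ}

theorem recurrenceEnergy_eq_initial (hu : ∀ n, u (n + 2) = a * u (n + 1) - u n) (n : ℕ) :
    recurrenceEnergy a u n = recurrenceEnergy a u 0 := by
  induction n with
  | zero => rfl
  | succ n ih =>
    rw [← ih, recurrenceEnergy, recurrenceEnergy, hu]
    ring

theorem abs_succ_le_of_recurrence (ha : |a| ≤ 2) (hu : ∀ n, u (n + 2) = a * u (n + 1) - u n)
    (n : ℕ) : |u (n + 1)| ≤ |u n| + √(recurrenceEnergy a u 0) := by
  have ha' : |a / 2| ≤ 1 := by rw [abs_div, abs_two]; linarith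
  have hform : 0 ≤ (1 - (a / 2) ^ 2) * u n ^ 2 :=
    mul_nonneg (by nlinarith [sq_abs (a / 2), abs_nonneg (a / 2)]) (sq_nonneg _)
  have hdiff : |u (n + 1) - a / 2 * u n| ≤ √(recurrenceEnergy a u 0) := by
    apply Real.abs_le_sqrt
    rw [← recurrenceEnergy_eq_initial hu n, recurrenceEnergy]
    linarith
  have hmul : |a / 2 * u n| ≤ |u n| := by
    rw [abs_mul]; exact mul_le_of_le_one_left (abs_nonneg _) ha'
  calc |u (n + 1)| = |(u (n + 1) - a / 2 * u n) + a / 2 * u n| := by ring_nf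
    _ ≤ |u (n + 1) - a / 2 * u n| + |a / 2 * u n| := abs_add_le _ _
    _ ≤ |u n| + √(recurrenceEnergy a u 0) := by linarith

theorem abs_le_of_recurrence (ha : |a| ≤ 2) (hu : ∀ n, u (n + 2) = a * u (n + 1) - u n)
    (n : ℕ) : |u n| ≤ |u 0| + √(recurrenceEnergy a u 0) * n := by
  induction n with
  | zero => simp
  | succ n ih =>
    push_cast
    linarith [abs_succ_le_of_recurrence ha hu n]

theorem HasSum.mul_one_sub_add_sq_of_recurrence {R : Type*} [CommRing R] [TopologicalSpace R]
    [IsTopologicalRing R] [T2Space R] {a r S : R} {u : ℕ → R}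
    (hu : ∀ n, u (n + 2) = a * u (n + 1) - u n) (hS : HasSum (fun n => r ^ n * u n) S) :
    S * (1 - a * r + r ^ 2) = u 0 + (u 1 - a * u 0) * r := by
  have hshift1 : HasSum (fun n => r ^ (n + 1) * u (n + 1)) (S - u 0) := by
    simpa using (hasSum_nat_add_iff' 1).2 hS
  have hshift2 : HasSum (fun n => r ^ (n + 2) * u (n + 2)) (S - (u 0 + r * u 1)) := by
    simpa [Finset.sum_range_succ] using (hasSum_nat_add_iff' 2).2 hS
  have hcombined : HasSum (fun n => r ^ (n + 2) * u (n + 2))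
      (a * r * (S - u 0) - r ^ 2 * S) := by
    refine ((hshift1.mul_left (a * r)).sub (hS.mul_left (r ^ 2))).congr_fun fun n => ?_
    rw [hu]; ring
  linear_combination hshift2.unique hcombined

end ThreeTermRecurrence

theorem summable_pow_mul_of_abs_le {r A B : ℝ} {u : ℕ → ℝ} (hr₀ : 0 ≤ r) (hr₁ : r < 1)
    (hu : ∀ n, |u n| ≤ A + B * n) : Summable fun n => r ^ n * u n := by
  have hr : ‖r‖ < 1 := by rwa [Real.norm_of_nonneg hr₀]
  have hmajorant : Summable fun n : ℕ => A * r ^ n + B * ((n : ℝ) ^ 1 * r ^ n) :=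
    ((summable_geometric_of_lt_one hr₀ hr₁).mul_left A).add
      ((summable_pow_mul_geometric_of_norm_lt_one 1 hr).mul_left B)
  refine hmajorant.of_norm_bounded fun n => ?_
  rw [Real.norm_eq_abs, abs_mul, abs_of_nonneg (pow_nonneg hr₀ n)]
  calc r ^ n * |u n| ≤ r ^ n * (A + B * n) := by gcongr; exact hu n
    _ = A * r ^ n + B * ((n : ℝ) ^ 1 * r ^ n) := by ring

theorem Qpoly_eval_add_two (s : ℕ) (x : ℝ) (n : ℕ) :
    (Qpoly s (n + 2)).eval x
      = (x - √s) * (Qpoly s (n + 1)).eval x - (Qpoly s n).eval x := by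
  simp only [Qpoly, eval_sub, eval_mul, eval_X, eval_C]
  ring

theorem stmt3_general (s : ℕ) (c : ℝ) (hc : 0 < c) (x : ℝ)
    (hx : |x - Real.sqrt s| ≤ 2) :
    HasSum (fun n : ℕ => Real.exp (-(c * n)) * (Qpoly s n).eval x)
      ((Real.exp c + Real.sqrt s) / (Real.exp c + Real.exp (-c) + Real.sqrt s - x)) := by
  set u : ℕ → ℝ := fun n => (Qpoly s n).eval x
  have hu : ∀ n, u (n + 2) = (x - √s) * u (n + 1) - u n := Qpoly_eval_add_two s x
  set r := Real.exp (-c)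
  have hr₀ : 0 < r := Real.exp_pos _
  have hr₁ : r < 1 := Real.exp_lt_one_iff.2 (neg_lt_zero.2 hc)
  have hweights : ∀ n : ℕ, Real.exp (-(c * n)) = r ^ n := fun n => by
    rw [← Real.exp_nat_mul]; ring_nf
  simp only [hweights]
  obtain ⟨S, hS⟩ := summable_pow_mul_of_abs_le hr₀.le hr₁ (abs_le_of_recurrence hx hu)
  have hgen := hS.mul_one_sub_add_sq_of_recurrence hu
  have hexp : Real.exp c * r = 1 := by rw [← Real.exp_add, add_neg_cancel, Real.exp_zero]
  have hcosh : 2 < Real.exp c + r := by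
    nlinarith [Real.add_one_lt_exp hc.ne', sq_nonneg (Real.exp c - 1)]
  have hden : 0 < Real.exp c + r + √s - x := by linarith [(abs_le.1 hx).2]
  have hu₀ : u 0 = 1 := eval_one
  have hu₁ : u 1 = x := eval_X
  rw [hu₀, hu₁] at hgen
  convert hS using 1
  rw [div_eq_iff hden.ne']
  linear_combination (-Real.exp c) * hgen + (S * (r - (x - √s)) - √s) * hexp

/-- For `c > 0` and `|x - √s| ≤ 2`, the series `∑ e^{-cn} Q_n^s(x)` converges with sum
`(e^c + √s)/(e^c + e^{-c} + √s - x)`. -/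
theorem stmt3 (s : ℕ) (hs : 1 ≤ s) (c : ℝ) (hc : 0 < c) (x : ℝ)
    (hx : |x - Real.sqrt s| ≤ 2) :
    HasSum (fun n : ℕ => Real.exp (-(c * n)) * (Qpoly s n).eval x)
      ((Real.exp c + Real.sqrt s) / (Real.exp c + Real.exp (-c) + Real.sqrt s - x)) :=
  stmt3_general s c hc x hx
end

section
/- For every integer s ≥ 1, ∫_{√s−2}^{√s+2} √(4−(x−√s)²)/(2π(x√s+1)) dx = 1/s; consequently the measure ν_s = (√(4−(x−√s)²)/(2π(x√s+1)))·1_{|x−√s|≤2} dx + (1−1/s)·δ_{−1/√s} is a Borel probability measure on ℝ. -/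
open MeasureTheory Polynomial Filter

/-!
Write `a = √s` and substitute `x = a + u`: since `x * a + 1 = a * (u + t)` with
`t = a + a⁻¹ ≥ 2`, the density becomes `(2 * π * a)⁻¹ * √(4 - u ^ 2) / (u + t)` on `[-2, 2]`.
An explicit arcsine primitive gives
`∫ u in -2..2, √(4 - u ^ 2) / (u + t) = π * (t - √(t ^ 2 - 4))`, and `√(t ^ 2 - 4) = a - a⁻¹`,
so the mass is `π * (2 / a) / (2 * π * a) = 1 / s`. The atom of mass `1 - 1 / s` completes it to
a probability measure. For `s = 1` the integrand is singular at `u = -2`; integrability still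
follows because it is the nonnegative derivative of a function continuous on `[-2, 2]`.
-/

open Real Set intervalIntegral

namespace SemicircleStieltjes

/- Since `4 - u ^ 2 = (t - u) * (u + t) - (t ^ 2 - 4)`, the integrand `√(4 - u ^ 2) / (u + t)`
splits as `(t - u) / √(4 - u ^ 2) - (t ^ 2 - 4) / ((u + t) * √(4 - u ^ 2))`; the two summands
are the derivatives of the two parts below. For `t = 2` the second part vanishes. -/
noncomputable def primitive (t u : ℝ) : ℝ :=
  t * arcsin (u / 2) + √(4 - u ^ 2) - √(t ^ 2 - 4) * arcsin ((4 + t * u) / (2 * (u + t)))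

lemma sqrt_one_sub_half_sq (u : ℝ) : √(1 - (u / 2) ^ 2) = √(4 - u ^ 2) / 2 := by
  rw [show 1 - (u / 2) ^ 2 = (4 - u ^ 2) / 2 ^ 2 by ring, sqrt_div' _ (by positivity),
    sqrt_sq zero_le_two]

lemma hasDerivAt_mul_arcsin_half_add_sqrt (t : ℝ) {u : ℝ} (hu : u ∈ Ioo (-2 : ℝ) 2) :
    HasDerivAt (fun u => t * arcsin (u / 2) + √(4 - u ^ 2)) ((t - u) / √(4 - u ^ 2)) u := by
  obtain ⟨hl, hr⟩ := hu
  have hpos : 0 < 4 - u ^ 2 := by nlinarith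
  have harcsin := (hasDerivAt_arcsin (x := u / 2) (by linarith) (by linarith)).comp u
    ((hasDerivAt_id u).div_const 2)
  have hroot := ((hasDerivAt_pow 2 u).const_sub 4).sqrt hpos.ne'
  refine ((harcsin.const_mul t).add hroot).congr_deriv ?_
  rw [sqrt_one_sub_half_sq]
  field_simp
  ring

lemma hasDerivAt_sqrt_mul_arcsin {t u : ℝ} (ht : 2 ≤ t) (hu : u ∈ Ioo (-2 : ℝ) 2) :
    HasDerivAt (fun u => √(t ^ 2 - 4) * arcsin ((4 + t * u) / (2 * (u + t))))
      ((t ^ 2 - 4) / ((u + t) * √(4 - u ^ 2))) u := by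
  rcases ht.eq_or_lt with rfl | ht
  · simp only [show (2 : ℝ) ^ 2 - 4 = 0 by norm_num, sqrt_zero, zero_mul, zero_div]
    exact hasDerivAt_const u 0
  obtain ⟨hl, hr⟩ := hu
  have hut : 0 < u + t := by linarith
  have hk : 0 < t ^ 2 - 4 := by nlinarith
  have hpos : 0 < 4 - u ^ 2 := by nlinarith
  have hg := ((hasDerivAt_id u).const_mul t |>.const_add 4).div
    (((hasDerivAt_id u).add_const t).const_mul 2) (by positivity)
  have hcos : 1 - ((4 + t * u) / (2 * (u + t))) ^ 2
      = (√(t ^ 2 - 4) * √(4 - u ^ 2) / (2 * (u + t))) ^ 2 := by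
    rw [div_pow (√(t ^ 2 - 4) * _), mul_pow, sq_sqrt hk.le, sq_sqrt hpos.le]
    field_simp
    ring
  have hcos_pos : 0 < 1 - ((4 + t * u) / (2 * (u + t))) ^ 2 := by
    rw [hcos]; positivity
  have harcsin := (hasDerivAt_arcsin (x := (4 + t * u) / (2 * (u + t)))
    (by rintro h; simp [h] at hcos_pos) (by rintro h; simp [h] at hcos_pos)).comp u hg
  refine (harcsin.const_mul √(t ^ 2 - 4)).congr_deriv ?_
  rw [hcos, sqrt_sq (by positivity)]
  simp only [id]
  field_simp
  ring

lemma hasDerivAt_primitive {t u : ℝ} (ht : 2 ≤ t) (hu : u ∈ Ioo (-2 : ℝ) 2) :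
    HasDerivAt (primitive t) (√(4 - u ^ 2) / (u + t)) u := by
  refine ((hasDerivAt_mul_arcsin_half_add_sqrt t hu).sub
    (hasDerivAt_sqrt_mul_arcsin ht hu)).congr_deriv ?_
  obtain ⟨hl, hr⟩ := hu
  have hut : 0 < u + t := by linarith
  have hpos : 0 < 4 - u ^ 2 := by nlinarith
  have hsq := sq_sqrt hpos.le
  field_simp
  linear_combination -hsq

lemma continuousOn_primitive {t : ℝ} (ht : 2 ≤ t) :
    ContinuousOn (primitive t) (Icc (-2) 2) := by
  have hmain : Continuous fun u : ℝ => t * arcsin (u / 2) + √(4 - u ^ 2) := by fun_prop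
  rcases ht.eq_or_lt with rfl | ht
  · convert hmain.continuousOn using 1
    funext u
    norm_num [primitive]
  refine hmain.continuousOn.sub (continuousOn_const.mul
    (continuous_arcsin.comp_continuousOn (ContinuousOn.div (by fun_prop) (by fun_prop) ?_)))
  intro u hu
  have : 0 < u + t := by linarith [hu.1]
  positivity

lemma primitive_two_sub_primitive_neg_two {t : ℝ} (ht : 2 ≤ t) :
    primitive t 2 - primitive t (-2) = π * (t - √(t ^ 2 - 4)) := by
  have hright : (4 + t * 2) / (2 * (2 + t)) = 1 := by
    rw [div_eq_one_iff_eq (by positivity)]; ring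
  have hleft : √(t ^ 2 - 4) * arcsin ((4 + t * -2) / (2 * (-2 + t)))
      = -(√(t ^ 2 - 4) * (π / 2)) := by
    rcases ht.eq_or_lt with rfl | ht
    · norm_num
    have hden : 2 * (-2 + t) ≠ 0 := by linarith
    rw [show (4 + t * -2) / (2 * (-2 + t)) = -1 by rw [div_eq_iff hden]; ring,
      arcsin_neg_one, mul_neg]
  simp only [primitive, hright, hleft]
  norm_num
  ring

end SemicircleStieltjes

lemma intervalIntegrable_sqrt_four_sub_sq_div_add {t : ℝ} (ht : 2 ≤ t) :
    IntervalIntegrable (fun u => √(4 - u ^ 2) / (u + t)) volume (-2) 2 :=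
  (intervalIntegrable_iff_integrableOn_Ioc_of_le (by norm_num)).2 <|
    integrableOn_deriv_of_nonneg (SemicircleStieltjes.continuousOn_primitive ht)
      (fun _ hu => SemicircleStieltjes.hasDerivAt_primitive ht hu)
      fun u hu => div_nonneg (sqrt_nonneg _) (by linarith [hu.1])

theorem integral_sqrt_four_sub_sq_div_add {t : ℝ} (ht : 2 ≤ t) :
    ∫ u in (-2)..2, √(4 - u ^ 2) / (u + t) = π * (t - √(t ^ 2 - 4)) := by
  rw [integral_eq_sub_of_hasDerivAt_of_le (by norm_num)
    (SemicircleStieltjes.continuousOn_primitive ht)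
    (fun _ hu => SemicircleStieltjes.hasDerivAt_primitive ht hu)
    (intervalIntegrable_sqrt_four_sub_sq_div_add ht),
    SemicircleStieltjes.primitive_two_sub_primitive_neg_two ht]

lemma two_le_add_inv_self {a : ℝ} (ha : 0 < a) : 2 ≤ a + a⁻¹ := by
  rw [← sub_nonneg, show a + a⁻¹ - 2 = (a - 1) ^ 2 / a by field_simp; ring]
  positivity

noncomputable def meixnerDensity (a x : ℝ) : ℝ :=
  √(4 - (x - a) ^ 2) / (2 * π * (x * a + 1))

lemma meixnerDensity_eq {a : ℝ} (ha : 0 < a) (x : ℝ) :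
    meixnerDensity a x
      = (2 * π * a)⁻¹ * (√(4 - (x - a) ^ 2) / (x - a + (a + a⁻¹))) := by
  rw [meixnerDensity, show 2 * π * (x * a + 1) = (x - a + (a + a⁻¹)) * (2 * π * a) by
    field_simp; ring, ← div_div, div_eq_inv_mul]

lemma meixnerDensity_nonneg {a x : ℝ} (ha : 0 ≤ a) (hx : x ∈ Icc (a - 2) (a + 2)) :
    0 ≤ meixnerDensity a x := by
  have : 0 ≤ x * a + 1 := by nlinarith [mul_le_mul_of_nonneg_right hx.1 ha, sq_nonneg (a - 1)]
  unfold meixnerDensity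
  positivity

lemma intervalIntegrable_meixnerDensity {a : ℝ} (ha : 1 ≤ a) :
    IntervalIntegrable (meixnerDensity a) volume (a - 2) (a + 2) := by
  have ha0 : 0 < a := by linarith
  have ht := two_le_add_inv_self ha0
  have := ((intervalIntegrable_sqrt_four_sub_sq_div_add ht).comp_sub_right a).const_mul
    (2 * π * a)⁻¹
  rw [neg_add_eq_sub, add_comm 2 a] at this
  convert this using 1
  exact funext (meixnerDensity_eq ha0)

theorem integral_meixnerDensity {a : ℝ} (ha : 1 ≤ a) :
    ∫ x in Icc (a - 2) (a + 2), meixnerDensity a x = 1 / a ^ 2 := by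
  have ha0 : 0 < a := by linarith
  have ht := two_le_add_inv_self ha0
  have hroot : √((a + a⁻¹) ^ 2 - 4) = a - a⁻¹ := by
    rw [show (a + a⁻¹) ^ 2 - 4 = (a - a⁻¹) ^ 2 by field_simp; ring]
    exact sqrt_sq (by rw [sub_nonneg]; exact inv_le_one_of_one_le₀ ha |>.trans ha)
  rw [integral_Icc_eq_integral_Ioc, ← integral_of_le (by linarith)]
  simp only [meixnerDensity_eq ha0]
  rw [intervalIntegral.integral_const_mul,
    integral_comp_sub_right (fun u => √(4 - u ^ 2) / (u + (a + a⁻¹))), sub_sub_cancel_left,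
    add_sub_cancel_left, integral_sqrt_four_sub_sq_div_add ht, hroot]
  field_simp
  ring

lemma lintegral_ofReal_ite_meixnerDensity {a : ℝ} (ha : 1 ≤ a) :
    ∫⁻ x, ENNReal.ofReal (if |x - a| ≤ 2 then meixnerDensity a x else 0)
      = ENNReal.ofReal (1 / a ^ 2) := by
  have hmem (x : ℝ) : |x - a| ≤ 2 ↔ x ∈ Icc (a - 2) (a + 2) := by
    rw [abs_sub_le_iff, mem_Icc]
    constructor <;> rintro ⟨h₁, h₂⟩ <;> constructor <;> linarith
  have hindicator : (fun x => ENNReal.ofReal (if |x - a| ≤ 2 then meixnerDensity a x else 0))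
      = (Icc (a - 2) (a + 2)).indicator fun x => ENNReal.ofReal (meixnerDensity a x) := by
    funext x
    simp only [hmem, indicator_apply]
    split_ifs <;> simp
  have hint : IntegrableOn (meixnerDensity a) (Icc (a - 2) (a + 2)) :=
    (intervalIntegrable_iff_integrableOn_Icc_of_le (by linarith)).1
      (intervalIntegrable_meixnerDensity ha)
  have hnonneg : 0 ≤ᵐ[volume.restrict (Icc (a - 2) (a + 2))] meixnerDensity a :=
    (ae_restrict_iff' measurableSet_Icc).2 <| .of_forall fun _ hx =>
      meixnerDensity_nonneg (by linarith) hx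
  rw [hindicator, lintegral_indicator measurableSet_Icc,
    ← ofReal_integral_eq_lintegral_ofReal hint hnonneg, integral_meixnerDensity ha]

lemma nuDensity_eq_meixnerDensity (s : ℕ) : nuDensity s = meixnerDensity √(s : ℝ) := rfl

/-- The absolutely continuous part of `ν_s` has total mass `1/s`, and `ν_s` is a
probability measure. -/
theorem stmt5 (s : ℕ) (hs : 1 ≤ s) :
    (∫ x in Set.Icc (Real.sqrt s - 2) (Real.sqrt s + 2), nuDensity s x) = 1 / s ∧
    IsProbabilityMeasure (nuMeas s) := by
  have hroot : 1 ≤ √(s : ℝ) := one_le_sqrt.2 (by exact_mod_cast hs)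
  have hsq : √(s : ℝ) ^ 2 = s := sq_sqrt s.cast_nonneg
  have hmass := integral_meixnerDensity hroot
  have hlintegral := lintegral_ofReal_ite_meixnerDensity hroot
  rw [hsq] at hmass hlintegral
  refine ⟨hmass, ⟨?_⟩⟩
  have hmass_le : 1 / (s : ℝ) ≤ 1 := div_le_one_of_le₀ (by exact_mod_cast hs) s.cast_nonneg
  rw [nuMeas, nuDensity_eq_meixnerDensity, Measure.add_apply, Measure.smul_apply, smul_eq_mul,
    Measure.dirac_apply_of_mem (mem_univ _), mul_one, withDensity_apply _ MeasurableSet.univ,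
    Measure.restrict_univ, hlintegral, ← ENNReal.ofReal_add (by positivity) (by linarith),
    add_sub_cancel, ENNReal.ofReal_one]
end

section
/- Let n ≥ 1 be an integer, let Q be a monic real polynomial of degree n, and let c ∈ ℝ. Setting t_N = N·ln N + c·N, one has Q(N)·exp(−t_N·Q′(N)/Q(N)) → e^{-cn} as N → ∞ (N ranging over the positive integers; note that Q(N) > 0 for all sufficiently large N, so the expression is eventually well defined). -/
open MeasureTheory Polynomial Filter

/-! Write `x Q'(x) = n Q(x) + P(x)` with `deg P < n`. For `x > 0` the exponent is then
`-n log x - c n - (log x + c) P(x) / Q(x)`, so the expression equals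
`Q(x) / xⁿ · e^{-cn} · exp (-(log x + c) P(x) / Q(x))`. The first factor tends to `1` because `Q`
is monic, the last one because `P / Q = O(1 / x)` kills the logarithm. -/

open Asymptotics Real Topology

namespace Polynomial

theorem degree_X_mul_derivative_sub_natDegree_mul_lt {R : Type*} [CommRing R] (Q : R[X]) :
    (X * derivative Q - C (Q.natDegree : R) * Q).degree < (Q.natDegree : WithBot ℕ) := by
  rw [degree_lt_iff_coeff_zero]
  intro m hm
  rcases m with _ | k
  · simp [Nat.le_zero.mp hm]
  rcases hm.eq_or_lt with hdeg | hlt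
  · simp only [coeff_sub, coeff_X_mul, coeff_derivative, coeff_C_mul, hdeg]
    push_cast
    ring
  · simp [coeff_derivative, coeff_eq_zero_of_natDegree_lt hlt]

theorem tendsto_eval_div_pow_natDegree (Q : ℝ[X]) :
    Tendsto (fun x => Q.eval x / x ^ Q.natDegree) atTop (𝓝 Q.leadingCoeff) := by
  have h := isEquivalent_atTop_div Q (X ^ Q.natDegree)
  simp only [eval_pow, eval_X, natDegree_X_pow, leadingCoeff_X_pow, div_one, sub_self,
    zpow_zero, mul_one] at h
  exact h.symm.tendsto_nhds tendsto_const_nhds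

theorem tendsto_log_mul_eval_div_eval_of_degree_lt {P Q : ℝ[X]} (h : P.degree < Q.degree) :
    Tendsto (fun x => log x * (P.eval x / Q.eval x)) atTop (𝓝 0) := by
  have hXP : (X * P).degree ≤ Q.degree := by
    rw [mul_comm, degree_mul_X]
    exact Nat.WithBot.add_one_le_of_lt h
  have hlog : (fun x => log x * P.eval x) =o[atTop] fun x => Q.eval x := by
    exact ((isLittleO_log_id_atTop.mul_isBigO (isBigO_refl (P.eval ·) atTop)).congr_right
      (by simp)).trans_isBigO (isBigO_atTop_of_degree_le _ _ hXP)
  simpa only [mul_div_assoc] using hlog.tendsto_div_nhds_zero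

theorem eval_mul_exp_neg_eq_eval_div_pow_mul {Q : ℝ[X]} (n : ℕ) (c : ℝ) {x : ℝ} (hx : 0 < x) :
    Q.eval x * exp (-((x * log x + c * x) * ((derivative Q).eval x / Q.eval x))) =
      Q.eval x / x ^ n * exp (-(c * n)) *
        exp (-((log x + c) * ((X * derivative Q - C (n : ℝ) * Q).eval x / Q.eval x))) := by
  rcases eq_or_ne (Q.eval x) 0 with hQx | hQx
  · simp [hQx]
  have hxn : x ^ n = exp (n * log x) := by rw [← log_pow, exp_log (pow_pos hx n)]
  rw [hxn, div_eq_mul_inv (Q.eval x), ← exp_neg, mul_assoc, mul_assoc, ← exp_add, ← exp_add]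
  congr 2
  simp only [eval_sub, eval_mul, eval_X, eval_C]
  field_simp
  ring

theorem Monic.tendsto_eval_mul_exp_neg {Q : ℝ[X]} (hQ : Q.Monic) (c : ℝ) :
    Tendsto (fun x => Q.eval x * exp (-((x * log x + c * x) *
        ((derivative Q).eval x / Q.eval x))))
      atTop (𝓝 (exp (-(c * Q.natDegree)))) := by
  set P := X * derivative Q - C (Q.natDegree : ℝ) * Q
  have hPQ : P.degree < Q.degree :=
    degree_eq_natDegree hQ.ne_zero ▸ degree_X_mul_derivative_sub_natDegree_mul_lt Q
  have hlead : Tendsto (fun x => Q.eval x / x ^ Q.natDegree) atTop (𝓝 1) :=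
    hQ.leadingCoeff ▸ tendsto_eval_div_pow_natDegree Q
  have hrem : Tendsto (fun x => (log x + c) * (P.eval x / Q.eval x)) atTop (𝓝 0) := by
    simpa only [add_mul, add_zero, mul_zero] using
      (tendsto_log_mul_eval_div_eval_of_degree_lt hPQ).add
        ((div_tendsto_atTop_zero_of_degree_lt P Q hPQ).const_mul c)
  have hlim := (hlead.mul_const (exp (-(c * Q.natDegree)))).mul
    ((continuous_exp.tendsto _).comp hrem.neg)
  simp only [one_mul, neg_zero, exp_zero, mul_one] at hlim
  refine hlim.congr' ?_
  filter_upwards [eventually_gt_atTop 0] with x hx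
  exact (eval_mul_exp_neg_eq_eval_div_pow_mul Q.natDegree c hx).symm

end Polynomial

theorem stmt6_general (n : ℕ) (Q : Polynomial ℝ) (hQ : Q.Monic)
    (hdeg : Q.natDegree = n) (c : ℝ) :
    Filter.Tendsto
      (fun N : ℕ => Q.eval (N : ℝ) *
        Real.exp (-((N * Real.log N + c * N) *
          ((Polynomial.derivative Q).eval (N : ℝ) / Q.eval (N : ℝ)))))
      Filter.atTop (nhds (Real.exp (-(c * n)))) :=
  hdeg ▸ (hQ.tendsto_eval_mul_exp_neg c).comp tendsto_natCast_atTop_atTop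

/-- For a monic polynomial `Q` of degree `n ≥ 1` and `t_N = N ln N + c N`, one has
`Q(N) exp(-t_N Q'(N)/Q(N)) → e^{-cn}`. -/
theorem stmt6 (n : ℕ) (hn : 1 ≤ n) (Q : Polynomial ℝ) (hQ : Q.Monic)
    (hdeg : Q.natDegree = n) (c : ℝ) :
    Filter.Tendsto
      (fun N : ℕ => Q.eval (N : ℝ) *
        Real.exp (-((N * Real.log N + c * N) *
          ((Polynomial.derivative Q).eval (N : ℝ) / Q.eval (N : ℝ)))))
      Filter.atTop (nhds (Real.exp (-(c * n)))) :=
  stmt6_general n Q hQ hdeg c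
end

section
/- Let s ≥ 1 and N ≥ 4 be integers, c ∈ ℝ, k ≥ 1, n ≥ 1 integers, and ℓ_1, …, ℓ_k positive integers with ℓ_1 + ⋯ + ℓ_k = 2n. Put R = P_{ℓ_1}·⋯·P_{ℓ_k} and t = N·ln(√s·N) + c·N, and assume t ≥ 0. Then R(√N)²·exp(−t·R′(√N)/(√N·R(√N))) ≤ e^{-2nc}/s^n. -/
open MeasureTheory Polynomial Filter

lemma Pkey (x : ℝ) (hx : 2 ≤ x) : ∀ m : ℕ,
    1 ≤ (Ppoly m).eval x ∧
    (Ppoly m).eval x ≤ (Ppoly (m+1)).eval x ∧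
    (Ppoly (m+1)).eval x ≤ x * (Ppoly m).eval x ∧
    0 ≤ x * (derivative (Ppoly m)).eval x - m * (Ppoly m).eval x ∧
    x * (derivative (Ppoly m)).eval x - m * (Ppoly m).eval x ≤
      x * (derivative (Ppoly (m+1))).eval x - (m+1) * (Ppoly (m+1)).eval x := by
  have hp2 : ∀ m : ℕ, (Ppoly (m+2)).eval x
      = x * (Ppoly (m+1)).eval x - (Ppoly m).eval x := by
    intro m; simp [Ppoly]
  have hd2 : ∀ m : ℕ, (derivative (Ppoly (m+2))).eval x
      = (Ppoly (m+1)).eval x + x * (derivative (Ppoly (m+1))).eval x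
        - (derivative (Ppoly m)).eval x := by
    intro m; simp [Ppoly]
  intro m
  induction m with
  | zero => simp [Ppoly]; linarith
  | succ m ih =>
    obtain ⟨h1, h2, h3, h4, h5⟩ := ih
    have hp := hp2 m
    have hd := hd2 m
    have hm1 : 1 ≤ (Ppoly (m+1)).eval x := le_trans h1 h2
    push_cast
    refine ⟨hm1, ?_, ?_, by linarith, ?_⟩
    · rw [hp]; nlinarith
    · rw [hp]; nlinarith
    · rw [show m+1+1 = m+2 from rfl, hp, hd]
      nlinarith [mul_nonneg (by linarith : (0:ℝ) ≤ x - 2)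
        (by linarith :
          0 ≤ x * (derivative (Ppoly (m+1))).eval x - ((m:ℝ)+1) * (Ppoly (m+1)).eval x)]

lemma P_one_le (x : ℝ) (hx : 2 ≤ x) (m : ℕ) : 1 ≤ (Ppoly m).eval x := (Pkey x hx m).1

lemma P_le_pow (x : ℝ) (hx : 2 ≤ x) (m : ℕ) : (Ppoly m).eval x ≤ x ^ m := by
  induction m with
  | zero => simp [Ppoly]
  | succ m ih =>
    have h := (Pkey x hx m).2.2.1
    calc (Ppoly (m+1)).eval x ≤ x * (Ppoly m).eval x := h
    _ ≤ x * x ^ m := by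
        have : (0:ℝ) ≤ x := by linarith
        nlinarith
    _ = x ^ (m+1) := by ring

lemma P_deriv (x : ℝ) (hx : 2 ≤ x) (m : ℕ) :
    (m : ℝ) * (Ppoly m).eval x ≤ x * (derivative (Ppoly m)).eval x := by
  have := (Pkey x hx m).2.2.2.1; linarith

/-- Estimate for the Brownian motion on `H_N^{s+}` at time `t = N ln(√s N) + cN`. -/
theorem stmt8 (s N : ℕ) (hs : 1 ≤ s) (hN : 4 ≤ N) (c : ℝ) (k n : ℕ)
    (hk : 1 ≤ k) (hn : 1 ≤ n) (ℓ : Fin k → ℕ) (hℓ : ∀ i, 1 ≤ ℓ i)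
    (hsum : ∑ i, ℓ i = 2 * n) (t : ℝ)
    (ht : t = N * Real.log (Real.sqrt s * N) + c * N) (ht0 : 0 ≤ t) :
    ((∏ i, Ppoly (ℓ i)).eval (Real.sqrt N)) ^ 2 *
      Real.exp (-(t * ((Polynomial.derivative (∏ i, Ppoly (ℓ i))).eval (Real.sqrt N) /
        (Real.sqrt N * (∏ i, Ppoly (ℓ i)).eval (Real.sqrt N)))))
      ≤ Real.exp (-(2 * n * c)) / s ^ n := by
  set x := Real.sqrt N with hxdef
  have hN4 : (4:ℝ) ≤ (N:ℝ) := by exact_mod_cast hN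
  have hx : 2 ≤ x := by
    rw [hxdef, show (2:ℝ) = Real.sqrt 4 by
      rw [show (4:ℝ) = 2^2 by norm_num, Real.sqrt_sq (by norm_num)]]
    exact Real.sqrt_le_sqrt hN4
  have hx0 : 0 < x := by linarith
  have hxsq : x ^ 2 = (N:ℝ) := Real.sq_sqrt (by linarith)
  -- evaluations
  set r := (∏ i, Ppoly (ℓ i)).eval x with hrdef
  set d := (derivative (∏ i, Ppoly (ℓ i))).eval x with hddef
  have hr_prod : r = ∏ i, (Ppoly (ℓ i)).eval x := by rw [hrdef, eval_prod]
  have one_le_prod : ∀ u : Finset (Fin k), (1:ℝ) ≤ (∏ i ∈ u, Ppoly (ℓ i)).eval x := by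
    intro u
    rw [eval_prod]
    have := Finset.prod_le_prod (s := u) (f := fun _ : Fin k => (1:ℝ))
      (g := fun i => (Ppoly (ℓ i)).eval x) (by intros; norm_num)
      (by intros; exact P_one_le x hx _)
    simpa using this
  have hr1 : 1 ≤ r := by rw [hrdef]; exact one_le_prod Finset.univ
  have hr0 : 0 < r := by linarith
  -- upper bound r ≤ N^n
  have hrub : r ≤ (N:ℝ) ^ n := by
    have : r ≤ ∏ i, x ^ (ℓ i) := by
      rw [hr_prod]
      exact Finset.prod_le_prod (fun i _ => by linarith [P_one_le x hx (ℓ i)])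
        (fun i _ => P_le_pow x hx (ℓ i))
    calc r ≤ ∏ i, x ^ (ℓ i) := this
      _ = x ^ (∑ i, ℓ i) := by rw [Finset.prod_pow_eq_pow_sum]
      _ = (x ^ 2) ^ n := by rw [hsum, pow_mul]
      _ = (N:ℝ) ^ n := by rw [hxsq]
  -- derivative bound : 2n * r ≤ x * d
  have hderiv : (2 * n : ℝ) * r ≤ x * d := by
    have main : ∀ u : Finset (Fin k),
        ((∑ i ∈ u, ℓ i : ℕ) : ℝ) * (∏ i ∈ u, Ppoly (ℓ i)).eval x ≤
          x * (derivative (∏ i ∈ u, Ppoly (ℓ i))).eval x := by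
      intro u
      induction u using Finset.induction_on with
      | empty => simp
      | @insert a u' ha ih =>
        rw [Finset.prod_insert ha, Finset.sum_insert ha, derivative_mul]
        simp only [eval_add, eval_mul]
        push_cast
        have hP1 := P_one_le x hx (ℓ a)
        have hQ1 := one_le_prod u'
        have hPd := P_deriv x hx (ℓ a)
        push_cast at ih
        nlinarith [mul_le_mul_of_nonneg_right hPd (by linarith : (0:ℝ) ≤ (∏ i ∈ u', Ppoly (ℓ i)).eval x),
          mul_le_mul_of_nonneg_left ih (by linarith : (0:ℝ) ≤ (Ppoly (ℓ a)).eval x)]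
    have := main Finset.univ
    rw [hsum] at this
    push_cast at this
    rw [hrdef, hddef]
    linarith
  -- the exponent bound
  have hN0 : (0:ℝ) < N := by linarith
  have hexp : t * (2 * n / N) ≤ t * (d / (x * r)) := by
    apply mul_le_mul_of_nonneg_left _ ht0
    rw [div_le_div_iff₀ hN0 (by positivity)]
    calc 2 * (n:ℝ) * (x * r) = (2 * n * r) * x := by ring
      _ ≤ (x * d) * x := by nlinarith
      _ = d * x ^ 2 := by ring
      _ = d * N := by rw [hxsq]
  have hmono : Real.exp (-(t * (d / (x * r)))) ≤ Real.exp (-(t * (2 * n / N))) := by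
    apply Real.exp_le_exp.mpr
    linarith
  -- compute the bound
  have hsN : (0:ℝ) < Real.sqrt s * N := by
    have : (0:ℝ) < Real.sqrt s := Real.sqrt_pos.mpr (by exact_mod_cast hs)
    positivity
  have hkey : ((N:ℝ) ^ n) ^ 2 * Real.exp (-(t * (2 * n / N)))
      = Real.exp (-(2 * n * c)) / s ^ n := by
    have hts : t * (2 * n / N) = 2 * n * Real.log (Real.sqrt s * N) + 2 * n * c := by
      rw [ht]; field_simp
    rw [hts, neg_add, Real.exp_add]
    have hlg : (2 : ℝ) * n * Real.log (Real.sqrt s * N)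
        = Real.log ((Real.sqrt s * N) ^ (2 * n)) := by
      rw [Real.log_pow]; push_cast; ring
    have h1 : Real.exp (-(2 * (n:ℝ) * Real.log (Real.sqrt s * N)))
        = ((Real.sqrt s * N) ^ (2 * n))⁻¹ := by
      rw [hlg, Real.exp_neg, Real.exp_log (by positivity)]
    rw [h1]
    have hexpand : ((Real.sqrt s * N : ℝ)) ^ (2 * n) = s ^ n * (N:ℝ) ^ (2*n) := by
      rw [mul_pow, pow_mul, Real.sq_sqrt (by positivity : (0:ℝ) ≤ ((s:ℕ):ℝ))]
    rw [hexpand]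
    have hs0 : (0:ℝ) < (s:ℝ) := by exact_mod_cast hs
    rw [← pow_mul]
    field_simp
    ring
  calc r ^ 2 * Real.exp (-(t * (d / (x * r))))
      ≤ ((N:ℝ) ^ n) ^ 2 * Real.exp (-(t * (2 * n / N))) := by
        apply mul_le_mul
        · exact pow_le_pow_left₀ (by linarith) hrub 2
        · exact hmono
        · positivity
        · positivity
    _ = Real.exp (-(2 * n * c)) / s ^ n := hkey
end

section
/- Let a > 0 and b be real numbers, let r, s > 0 be real numbers, and let c₀ ∈ ℝ. If for every real c ≤ c₀ one has (e^{-(ac+b)} − e^{ac+b}/r)/(e^{-(ac+b)} + 1) = (e^{-c} − e^{c}/s)/(e^{-c} + 1), then a = 1, b = 0, and r = s. -/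
/-!
Both sides of the identity are values of `profile t y = (e⁻ʸ - eʸ / t) / (e⁻ʸ + 1)`, and
`1 - profile t y = eʸ (1 + eʸ / t) / (1 + eʸ) ~ eʸ` as `y → -∞`, whatever `t` is. Letting
`c → -∞` therefore gives `e^(ac+b) ~ eᶜ`, i.e. `(a - 1) c + b → 0`, which forces `a = 1` and
`b = 0`; then `r = s` is read off at a single point.
-/

open MeasureTheory Polynomial Filter

open Asymptotics Real Topology

noncomputable def profile (t y : ℝ) : ℝ :=
  (exp (-y) - exp y / t) / (exp (-y) + 1)

lemma one_sub_profile_div_exp (t y : ℝ) :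
    (1 - profile t y) / exp y = (1 + exp y / t) / (1 + exp y) := by
  have hy := (exp_pos y).ne'
  rw [profile, exp_neg]
  field_simp
  ring

lemma one_sub_profile_isEquivalent_exp (t : ℝ) :
    (fun y ↦ 1 - profile t y) ~[atBot] exp := by
  have hlim :
      Tendsto (fun y ↦ (1 + exp y / t) / (1 + exp y)) atBot (𝓝 ((1 + 0 / t) / (1 + 0))) :=
    ((tendsto_exp_atBot.div_const t).const_add 1).div (tendsto_exp_atBot.const_add 1) (by norm_num)
  rw [zero_div, add_zero, div_one] at hlim
  exact isEquivalent_of_tendsto_one (hlim.congr fun y ↦ (one_sub_profile_div_exp t y).symm)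

lemma eq_of_profile_eq {r s y : ℝ} (h : profile r y = profile s y) : r = s := by
  have h' := congrArg (fun p ↦ (1 - p) / exp y) h
  simp only [one_sub_profile_div_exp] at h'
  rw [div_left_inj' (by positivity), add_right_inj, div_eq_mul_inv, div_eq_mul_inv,
    mul_right_inj' (exp_pos y).ne', inv_inj] at h'
  exact h'

lemma eq_zero_of_tendsto_affine_atBot {m b : ℝ}
    (h : Tendsto (fun c ↦ m * c + b) atBot (𝓝 0)) : m = 0 ∧ b = 0 := by
  have hm : Tendsto (fun _ : ℝ ↦ m) atBot (𝓝 (0 - 0)) :=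
    (h.sub (h.comp (tendsto_atBot_add_const_right _ (-1) tendsto_id))).congr fun c ↦ by
      simp only [Function.comp_apply, id]; ring
  obtain rfl : m = 0 := by rwa [sub_zero, tendsto_const_nhds_iff] at hm
  exact ⟨rfl, by simpa using h⟩

theorem stmt11_general (a b r s c₀ : ℝ) (ha : 0 < a)
    (h : ∀ c : ℝ, c ≤ c₀ →
      (Real.exp (-(a * c + b)) - Real.exp (a * c + b) / r) /
          (Real.exp (-(a * c + b)) + 1) =
        (Real.exp (-c) - Real.exp c / s) / (Real.exp (-c) + 1)) :
    a = 1 ∧ b = 0 ∧ r = s := by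
  have hlin : Tendsto (fun c ↦ a * c + b) atBot atBot :=
    tendsto_atBot_add_const_right _ b (tendsto_id.const_mul_atBot ha)
  have hequiv_r := (one_sub_profile_isEquivalent_exp r).comp_tendsto hlin
  have hequiv_s : (fun c ↦ 1 - profile r (a * c + b)) ~[atBot] exp :=
    (one_sub_profile_isEquivalent_exp s).congr_left <|
      (eventually_le_atBot c₀).mono fun c hc ↦ congrArg (1 - ·) (h c hc).symm
  have hexp : Tendsto (fun c ↦ exp (a * c + b) / exp c) atBot (𝓝 1) :=
    (isEquivalent_iff_tendsto_one (.of_forall fun c ↦ (exp_pos c).ne')).mp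
      (hequiv_r.symm.trans hequiv_s)
  have haff : Tendsto (fun c ↦ (a - 1) * c + b) atBot (𝓝 0) := by
    simpa [Function.comp_def, ← exp_sub, sub_mul, add_sub_right_comm] using
      (continuousAt_log one_ne_zero).tendsto.comp hexp
  obtain ⟨ha1, rfl⟩ := eq_zero_of_tendsto_affine_atBot haff
  obtain rfl : a = 1 := sub_eq_zero.mp ha1
  exact ⟨rfl, rfl, eq_of_profile_eq (y := c₀) (by simpa [profile] using h c₀ le_rfl)⟩

/-- Rigidity of the singular-part profile under affine reparametrization. -/
theorem stmt11 (a b r s c₀ : ℝ) (ha : 0 < a) (hr : 0 < r) (hs : 0 < s)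
    (h : ∀ c : ℝ, c ≤ c₀ →
      (Real.exp (-(a * c + b)) - Real.exp (a * c + b) / r) /
          (Real.exp (-(a * c + b)) + 1) =
        (Real.exp (-c) - Real.exp c / s) / (Real.exp (-c) + 1)) :
    a = 1 ∧ b = 0 ∧ r = s :=
  stmt11_general a b r s c₀ ha h
end

section
/- For every integer s ≥ 1 and every m ∈ ℕ, there exist nonnegative real numbers c_0, …, c_m such that X^m = ∑_{k=0}^m c_k·Q_k^s in the ring of real polynomials. -/
open MeasureTheory Polynomial Filter

/-! Since `X * Q_0 = Q_1` and `X * Q_{k+1} = Q_{k+2} + √s * Q_{k+1} + Q_k` have nonnegative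
coefficients, multiplication by `X` maps the cone spanned by `Q_0, …, Q_{n-1}` into the cone
spanned by `Q_0, …, Q_n`; induction on `m` puts `X ^ m` in the cone spanned by `Q_0, …, Q_m`. -/

theorem PointedCone.exists_nonneg_sum_of_mem_hull_image_finset {R E ι : Type*} [Semiring R]
    [PartialOrder R] [IsOrderedRing R] [AddCommMonoid E] [Module R E] {v : ι → E}
    {s : Finset ι} {x : E} (hx : x ∈ PointedCone.hull R (v '' s)) :
    ∃ c : ι → R, (∀ i, 0 ≤ c i) ∧ x = ∑ i ∈ s, c i • v i := by
  obtain ⟨c, rfl⟩ := (Submodule.mem_span_image_finset_iff_exists_fun' _).mp hx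
  exact ⟨fun i => c i, fun i => (c i).2, rfl⟩

theorem X_mul_Qpoly_succ (s n : ℕ) :
    X * Qpoly s (n + 1) = Qpoly s (n + 2) + C √(s : ℝ) * Qpoly s (n + 1) + Qpoly s n := by
  rw [Qpoly]
  ring

noncomputable abbrev qCone (s n : ℕ) : PointedCone ℝ ℝ[X] :=
  PointedCone.hull ℝ (Qpoly s '' (Finset.range n : Set ℕ))

theorem Qpoly_mem_qCone {s k n : ℕ} (hk : k < n) : Qpoly s k ∈ qCone s n :=
  Submodule.subset_span ⟨k, Finset.mem_range.mpr hk, rfl⟩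

theorem X_mul_Qpoly_mem_qCone {s k n : ℕ} (hk : k < n) : X * Qpoly s k ∈ qCone s (n + 1) := by
  cases k with
  | zero => simpa [Qpoly] using Qpoly_mem_qCone (s := s) (k := 1) (by omega)
  | succ k =>
    rw [X_mul_Qpoly_succ, C_mul', ← Nonneg.mk_smul _ (Real.sqrt_nonneg _)]
    exact add_mem (add_mem (Qpoly_mem_qCone (by omega))
      (Submodule.smul_mem _ _ (Qpoly_mem_qCone (by omega)))) (Qpoly_mem_qCone (by omega))

theorem X_mul_mem_qCone {s n : ℕ} {p : ℝ[X]} (hp : p ∈ qCone s n) : X * p ∈ qCone s (n + 1) := by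
  have hle : qCone s n ≤ (qCone s (n + 1)).comap (LinearMap.mulLeft ℝ X) := by
    refine Submodule.span_le.mpr ?_
    rintro _ ⟨k, hk, rfl⟩
    exact X_mul_Qpoly_mem_qCone (Finset.mem_range.mp hk)
  exact hle hp

theorem X_pow_mem_qCone (s m : ℕ) : X ^ m ∈ qCone s (m + 1) := by
  induction m with
  | zero => simpa [Qpoly] using Qpoly_mem_qCone (s := s) (k := 0) one_pos
  | succ m ih => simpa only [pow_succ'] using X_mul_mem_qCone ih

theorem stmt13_general (s : ℕ) (m : ℕ) :
    ∃ cs : ℕ → ℝ, (∀ k, 0 ≤ cs k) ∧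
      (Polynomial.X : Polynomial ℝ) ^ m =
        ∑ k ∈ Finset.range (m + 1), Polynomial.C (cs k) * Qpoly s k := by
  obtain ⟨c, hc, h⟩ :=
    PointedCone.exists_nonneg_sum_of_mem_hull_image_finset (X_pow_mem_qCone s m)
  exact ⟨c, hc, by simpa only [smul_eq_C_mul] using h⟩

/-- Every monomial `X^m` is a nonnegative linear combination of the `Q_k^s`. -/
theorem stmt13 (s : ℕ) (hs : 1 ≤ s) (m : ℕ) :
    ∃ cs : ℕ → ℝ, (∀ k, 0 ≤ cs k) ∧
      (Polynomial.X : Polynomial ℝ) ^ m =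
        ∑ k ∈ Finset.range (m + 1), Polynomial.C (cs k) * Qpoly s k :=
  stmt13_general s m
end

section
/- For every real number c < 0, one has d_TV(η^s_{c − ln √s}, ν_s) → e^{-c}/(1 + e^{-c}) as the integer s tends to infinity. -/
open MeasureTheory Polynomial Filter

/-! Write `a = √s` and `c' = c - log a`, so that `e^{-c'} = e^{-c} a ≥ a + 2` for large `s`.
Then `f_{c'} ≤ 1` on `(-∞, a + 2]`, which carries `ν_s`, and the atom `y = e^{c'} + a + e^{-c'}` of
`η = η_{c'}^s` lies outside it. Its mass `m` gives `d_TV(η, ν_s) ≥ m`, while `η ≤ ν_s + m δ_y` and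
`ν_s ≤ η + ∫ (1 - f_{c'}) dν_s` give `d_TV(η, ν_s) ≤ max m (∫ (1 - f_{c'}) dν_s)`. As functions of
`t = 1/s`, both `m` and `1 - f_{c'}(-1/a)` are continuous with value `e^{-c}/(1 + e^{-c})` at
`t = 0`, and the integral exceeds `1 - f_{c'}(-1/a)` by at most the mass of the absolutely
continuous part of `ν_s`, which is `O(1/s)`: its density is `O(1/s)` on an interval of length `4`.
-/

open Set Real
open scoped ENNReal Topology

instance : Nonempty {A : Set ℝ // MeasurableSet A} := ⟨⟨∅, .empty⟩⟩

section TotalVariation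

variable {μ ν : Measure ℝ}

theorem abs_measureReal_sub_le_dTV [IsFiniteMeasure μ] [IsFiniteMeasure ν] {A : Set ℝ}
    (hA : MeasurableSet A) : |μ.real A - ν.real A| ≤ dTV μ ν := by
  unfold dTV
  refine le_ciSup (f := fun A : {A : Set ℝ // MeasurableSet A} => |μ.real A - ν.real A|)
    ⟨μ.real univ + ν.real univ, ?_⟩ (⟨A, hA⟩ : {A : Set ℝ // MeasurableSet A})
  rintro _ ⟨⟨B, -⟩, rfl⟩
  have hμ : μ.real B ≤ μ.real univ := measureReal_mono (subset_univ B)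
  have hν : ν.real B ≤ ν.real univ := measureReal_mono (subset_univ B)
  exact abs_sub_le_iff.2 ⟨by linarith [measureReal_nonneg (μ := ν) (s := B)],
    by linarith [measureReal_nonneg (μ := μ) (s := B)]⟩

theorem dTV_le_max [IsFiniteMeasure μ] [IsFiniteMeasure ν] {b₁ b₂ : ℝ≥0∞}
    (hb₁ : b₁ ≠ ∞) (hb₂ : b₂ ≠ ∞) (h₁ : ∀ A, MeasurableSet A → μ A ≤ ν A + b₁)
    (h₂ : ∀ A, MeasurableSet A → ν A ≤ μ A + b₂) :
    dTV μ ν ≤ max b₁.toReal b₂.toReal := by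
  refine ciSup_le fun ⟨A, hA⟩ => abs_sub_le_iff.2 ⟨?_, ?_⟩
  · linarith [ENNReal.toReal_le_add (h₁ A hA) (measure_ne_top ν A) hb₁,
      le_max_left b₁.toReal b₂.toReal]
  · linarith [ENNReal.toReal_le_add (h₂ A hA) (measure_ne_top μ A) hb₂,
      le_max_right b₁.toReal b₂.toReal]

variable {g : ℝ → ℝ≥0∞} {m y : ℝ}

theorem withDensity_add_dirac_apply_le (hg : ∀ᵐ x ∂ν, g x ≤ 1) {A : Set ℝ}
    (hA : MeasurableSet A) :
    (ν.withDensity g + ENNReal.ofReal m • Measure.dirac y) A ≤ ν A + ENNReal.ofReal m := by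
  rw [Measure.add_apply, Measure.smul_apply, smul_eq_mul, withDensity_apply _ hA]
  gcongr
  · exact (setLIntegral_mono_ae' hA (hg.mono fun x hx _ => hx)).trans_eq (setLIntegral_one A)
  · exact mul_le_of_le_one_right' prob_le_one

theorem isFiniteMeasure_withDensity_add_dirac [IsFiniteMeasure ν] (hg : ∀ᵐ x ∂ν, g x ≤ 1) :
    IsFiniteMeasure (ν.withDensity g + ENNReal.ofReal m • Measure.dirac y) :=
  ⟨(withDensity_add_dirac_apply_le hg .univ).trans_lt
    (ENNReal.add_lt_top.2 ⟨measure_lt_top ν univ, ENNReal.ofReal_lt_top⟩)⟩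

theorem le_dTV_withDensity_add_dirac [IsFiniteMeasure ν] (hg : ∀ᵐ x ∂ν, g x ≤ 1)
    (hy : ν {y} = 0) (hm : 0 ≤ m) :
    m ≤ dTV (ν.withDensity g + ENNReal.ofReal m • Measure.dirac y) ν := by
  have := isFiniteMeasure_withDensity_add_dirac (m := m) (y := y) hg
  have hμy : (ν.withDensity g + ENNReal.ofReal m • Measure.dirac y) {y} = ENNReal.ofReal m := by
    rw [Measure.add_apply, Measure.smul_apply, smul_eq_mul,
      withDensity_apply _ (measurableSet_singleton y), setLIntegral_measure_zero _ _ hy,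
      Measure.dirac_apply_of_mem (mem_singleton y), mul_one, zero_add]
  simpa [measureReal_def, hμy, hy, ENNReal.toReal_ofReal hm, abs_of_nonneg hm] using
    abs_measureReal_sub_le_dTV (μ := ν.withDensity g + ENNReal.ofReal m • Measure.dirac y)
      (ν := ν) (measurableSet_singleton y)

theorem dTV_withDensity_add_dirac_le [IsFiniteMeasure ν] (hgm : AEMeasurable g ν)
    (hg : ∀ᵐ x ∂ν, g x ≤ 1) (hm : 0 ≤ m) :
    dTV (ν.withDensity g + ENNReal.ofReal m • Measure.dirac y) ν
      ≤ max m (∫⁻ x, 1 - g x ∂ν).toReal := by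
  have := isFiniteMeasure_withDensity_add_dirac (m := m) (y := y) hg
  have hdefect : ∫⁻ x, 1 - g x ∂ν ≠ ∞ :=
    ((lintegral_mono fun _ => tsub_le_self).trans_eq (lintegral_one (μ := ν))).trans_lt
      (measure_lt_top ν univ) |>.ne
  have hν : ∀ A, MeasurableSet A →
      ν A ≤ (ν.withDensity g + ENNReal.ofReal m • Measure.dirac y) A + ∫⁻ x, 1 - g x ∂ν := by
    intro A hA
    calc ν A = ∫⁻ _ in A, 1 ∂ν := (setLIntegral_one A).symm
      _ ≤ ∫⁻ x in A, g x + (1 - g x) ∂ν := lintegral_mono fun _ => le_add_tsub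
      _ = (∫⁻ x in A, g x ∂ν) + ∫⁻ x in A, 1 - g x ∂ν := lintegral_add_left' hgm.restrict _
      _ ≤ _ := by
        rw [Measure.add_apply, withDensity_apply _ hA]
        exact add_le_add le_self_add (setLIntegral_le_lintegral _ _)
  simpa only [ENNReal.toReal_ofReal hm] using dTV_le_max ENNReal.ofReal_ne_top hdefect
    (fun A hA => withDensity_add_dirac_apply_le hg hA) hν

end TotalVariation

section FreeMeixner

variable {s : ℕ}

noncomputable def nuAC (s : ℕ) : Measure ℝ :=
  volume.withDensity fun x => ENNReal.ofReal (if |x - √s| ≤ 2 then nuDensity s x else 0)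

theorem nuMeas_eq_nuAC_add (s : ℕ) :
    nuMeas s = nuAC s + ENNReal.ofReal (1 - 1 / (s : ℝ)) • Measure.dirac (-1 / √s) := rfl

theorem nuDensity_le (hs : 1 < √s) {x : ℝ} (hx : |x - √s| ≤ 2) :
    nuDensity s x ≤ (π * (√s - 1) ^ 2)⁻¹ := by
  obtain ⟨hxl, -⟩ := abs_le.1 hx
  have hnum : √(4 - (x - √s) ^ 2) ≤ 2 := Real.sqrt_le_iff.2 ⟨by norm_num, by nlinarith⟩
  have hsq : 0 < (√s - 1) ^ 2 := by nlinarith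
  have hden : (√s - 1) ^ 2 ≤ x * √s + 1 := by nlinarith
  calc nuDensity s x ≤ 2 / (2 * π * (√s - 1) ^ 2) := by
        rw [nuDensity]
        gcongr
    _ = (π * (√s - 1) ^ 2)⁻¹ := by field_simp

theorem nuAC_univ_le (hs : 1 < √s) : nuAC s univ ≤ ENNReal.ofReal (4 / (π * (√s - 1) ^ 2)) := by
  rw [nuAC, withDensity_apply _ .univ, Measure.restrict_univ]
  calc ∫⁻ x, ENNReal.ofReal (if |x - √s| ≤ 2 then nuDensity s x else 0)
      ≤ ∫⁻ x, (Icc (√s - 2) (√s + 2)).indicator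
          (fun _ => ENNReal.ofReal (π * (√s - 1) ^ 2)⁻¹) x := by
        refine lintegral_mono fun x => ?_
        split_ifs with hx
        · rw [indicator_of_mem (by constructor <;> linarith [abs_le.1 hx])]
          exact ENNReal.ofReal_le_ofReal (nuDensity_le hs hx)
        · simp
    _ = ENNReal.ofReal (4 / (π * (√s - 1) ^ 2)) := by
        rw [lintegral_indicator_const measurableSet_Icc, Real.volume_Icc,
          ← ENNReal.ofReal_mul (by positivity)]
        ring_nf

theorem isFiniteMeasure_nuMeas (hs : 1 < √s) : IsFiniteMeasure (nuMeas s) := by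
  refine ⟨?_⟩
  rw [nuMeas_eq_nuAC_add, Measure.add_apply, Measure.smul_apply, smul_eq_mul]
  exact ENNReal.add_lt_top.2 ⟨(nuAC_univ_le hs).trans_lt ENNReal.ofReal_lt_top,
    ENNReal.mul_lt_top ENNReal.ofReal_lt_top (measure_lt_top _ _)⟩

theorem nuMeas_Ioi_eq_zero (s : ℕ) : nuMeas s (Ioi (√s + 2)) = 0 := by
  have hAC : nuAC s (Ioi (√s + 2)) = 0 := by
    rw [nuAC, withDensity_apply _ measurableSet_Ioi]
    refine (setLIntegral_congr_fun measurableSet_Ioi fun x (hx : √s + 2 < x) => ?_).trans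
      (setLIntegral_const _ 0 |>.trans (zero_mul _))
    rw [if_neg (by rw [abs_le]; intro h; linarith [h.2])]
    simp
  have hatom : -1 / √s ∉ Ioi (√s + 2) := by
    have : -1 / √s ≤ 0 := div_nonpos_of_nonpos_of_nonneg (by norm_num) (sqrt_nonneg s)
    simp only [mem_Ioi, not_lt]
    linarith [sqrt_nonneg s]
  rw [nuMeas_eq_nuAC_add, Measure.add_apply, Measure.smul_apply,
    Measure.dirac_apply' _ measurableSet_Ioi, indicator_of_notMem hatom, hAC, smul_zero, add_zero]

theorem ae_nuMeas_le (s : ℕ) : ∀ᵐ x ∂nuMeas s, x ≤ √s + 2 :=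
  ae_iff.2 <| by simp only [not_le]; exact nuMeas_Ioi_eq_zero s

theorem lintegral_one_sub_nuMeas_le (s : ℕ) (g : ℝ → ℝ≥0∞) :
    ∫⁻ x, 1 - g x ∂nuMeas s ≤ nuAC s univ + (1 - g (-1 / √s)) := by
  rw [nuMeas_eq_nuAC_add, lintegral_add_measure, lintegral_smul_measure, lintegral_dirac,
    smul_eq_mul]
  gcongr
  · exact (lintegral_mono fun _ => tsub_le_self).trans_eq (lintegral_one (μ := nuAC s))
  · exact mul_le_of_le_one_left' (ENNReal.ofReal_le_one.2 (by
      linarith [one_div_nonneg.2 (Nat.cast_nonneg (α := ℝ) s)]))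

end FreeMeixner

section Eta

variable {s : ℕ} {c : ℝ}

theorem fc_nonneg {x : ℝ} (hx : x ≤ exp (-c)) : 0 ≤ fc s c x :=
  div_nonneg (by positivity) (by linarith [exp_pos c, sqrt_nonneg s])

theorem fc_le_one {x : ℝ} (hx : x ≤ exp (-c)) : fc s c x ≤ 1 :=
  div_le_one_of_le₀ (by linarith) (by linarith [exp_pos c, sqrt_nonneg s])

theorem etaMeas_of_neg (hc : c < 0) :
    etaMeas s c = (nuMeas s).withDensity (fun x => ENNReal.ofReal (fc s c x))
      + ENNReal.ofReal ((exp (-c) - exp c) / (exp (-c) + √s))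
        • Measure.dirac (exp c + √s + exp (-c)) := by
  rw [etaMeas, if_pos hc]

theorem ae_fc_le_one (hc : √s + 2 ≤ exp (-c)) :
    ∀ᵐ x ∂nuMeas s, ENNReal.ofReal (fc s c x) ≤ 1 :=
  (ae_nuMeas_le s).mono fun _ hx => ENNReal.ofReal_le_one.2 (fc_le_one (hx.trans hc))

theorem atomMass_le_dTV_etaMeas (hs : 1 < √s) (hc : √s + 2 ≤ exp (-c)) :
    (exp (-c) - exp c) / (exp (-c) + √s) ≤ dTV (etaMeas s c) (nuMeas s) := by
  have := isFiniteMeasure_nuMeas hs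
  have hneg : c < 0 := neg_pos.1 (one_lt_exp_iff.1 (by linarith))
  rw [etaMeas_of_neg hneg]
  refine le_dTV_withDensity_add_dirac (ae_fc_le_one hc) ?_ ?_
  · refine measure_mono_null (singleton_subset_iff.2 ?_) (nuMeas_Ioi_eq_zero s)
    exact show √s + 2 < exp c + √s + exp (-c) by linarith [exp_pos c]
  · exact div_nonneg (sub_nonneg.2 (exp_le_exp.2 (by linarith))) (by positivity)

theorem dTV_etaMeas_le (hs : 1 < √s) (hc : √s + 2 ≤ exp (-c)) :
    dTV (etaMeas s c) (nuMeas s) ≤ max ((exp (-c) - exp c) / (exp (-c) + √s))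
      (4 / (π * (√s - 1) ^ 2) + (1 - fc s c (-1 / √s))) := by
  have := isFiniteMeasure_nuMeas hs
  have hneg : c < 0 := neg_pos.1 (one_lt_exp_iff.1 (by linarith))
  have hatom : -1 / √s ≤ exp (-c) :=
    (div_nonpos_of_nonpos_of_nonneg (by norm_num) (sqrt_nonneg s)).trans (exp_pos _).le
  have hW : 0 ≤ 4 / (π * (√s - 1) ^ 2) := by positivity
  rw [etaMeas_of_neg hneg]
  refine (dTV_withDensity_add_dirac_le (by unfold fc; fun_prop) (ae_fc_le_one hc)
    (div_nonneg (sub_nonneg.2 (exp_le_exp.2 (by linarith))) (by positivity))).trans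
    (max_le_max le_rfl (ENNReal.toReal_le_of_le_ofReal
      (add_nonneg hW (sub_nonneg.2 (fc_le_one hatom))) ?_))
  calc ∫⁻ x, 1 - ENNReal.ofReal (fc s c x) ∂nuMeas s
      ≤ nuAC s univ + (1 - ENNReal.ofReal (fc s c (-1 / √s))) :=
        lintegral_one_sub_nuMeas_le s _
    _ ≤ _ := by
      rw [ENNReal.ofReal_add hW (sub_nonneg.2 (fc_le_one hatom)),
        ENNReal.ofReal_sub _ (fc_nonneg hatom), ENNReal.ofReal_one]
      gcongr
      exact nuAC_univ_le hs

end Eta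

section Rescaled

variable {s : ℕ} (c : ℝ)

/- `etaAtomMass c (1/s)` and `densityDefect c (1/s)` are the mass of the atom of
`η_{c - log √s}^s` and `1 - f_{c - log √s}(-1/√s)`, see `atomMass_rescaled` and
`one_sub_fc_rescaled`. -/
noncomputable def etaAtomMass (t : ℝ) : ℝ := (exp (-c) - exp c * t) / (1 + exp (-c))

noncomputable def densityDefect (t : ℝ) : ℝ := (exp (-c) + t) / (exp c * t + 1 + exp (-c) + t)

theorem tendsto_etaAtomMass :
    Tendsto (etaAtomMass c) (𝓝 0) (𝓝 (exp (-c) / (1 + exp (-c)))) :=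
  (by unfold etaAtomMass; fun_prop : Continuous (etaAtomMass c)).tendsto' _ _
    (by simp [etaAtomMass])

theorem tendsto_densityDefect :
    Tendsto (densityDefect c) (𝓝 0) (𝓝 (exp (-c) / (1 + exp (-c)))) := by
  have : ContinuousAt (densityDefect c) 0 := by
    unfold densityDefect; fun_prop (disch := positivity)
  simpa [densityDefect] using this.tendsto

variable {c}

theorem exp_sub_log {a : ℝ} (ha : 0 < a) : exp (c - log a) = exp c / a := by
  rw [exp_sub, exp_log ha]

theorem exp_neg_sub_log {a : ℝ} (ha : 0 < a) : exp (-(c - log a)) = exp (-c) * a := by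
  rw [neg_sub, exp_sub, exp_log ha, exp_neg, div_eq_mul_inv, mul_comm]

theorem atomMass_rescaled (ha : 0 < √s) :
    (exp (-(c - log √s)) - exp (c - log √s)) / (exp (-(c - log √s)) + √s)
      = etaAtomMass c (s : ℝ)⁻¹ := by
  have hs : (0 : ℝ) < s := sqrt_pos.1 ha
  rw [exp_sub_log ha, exp_neg_sub_log ha, etaAtomMass]
  field_simp
  rw [sq_sqrt (Nat.cast_nonneg _)]
  ring

theorem one_sub_fc_rescaled (ha : 0 < √s) :
    1 - fc s (c - log √s) (-1 / √s) = densityDefect c (s : ℝ)⁻¹ := by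
  have hs : (0 : ℝ) < s := sqrt_pos.1 ha
  rw [fc, exp_sub_log ha, exp_neg_sub_log ha, densityDefect]
  field_simp
  rw [sq_sqrt (Nat.cast_nonneg _), sub_neg_eq_add, one_sub_div (by positivity)]
  field_simp
  ring

end Rescaled

theorem tendsto_sqrt_natCast_atTop : Tendsto (fun s : ℕ => √(s : ℝ)) atTop atTop :=
  tendsto_sqrt_atTop.comp tendsto_natCast_atTop_atTop

theorem tendsto_nuAC_univ_bound :
    Tendsto (fun s : ℕ => 4 / (π * (√s - 1) ^ 2)) atTop (𝓝 0) := by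
  refine tendsto_const_nhds.div_atTop (Tendsto.const_mul_atTop pi_pos ?_)
  simpa only [sub_eq_add_neg, Function.comp_def] using (tendsto_pow_atTop two_ne_zero).comp
    (tendsto_atTop_add_const_right _ (-1) tendsto_sqrt_natCast_atTop)

theorem eventually_rescaled_admissible {c : ℝ} (hc : c < 0) :
    ∀ᶠ s : ℕ in atTop, 1 < √s ∧ √s + 2 ≤ exp (-(c - log √s)) := by
  have he : 0 < exp (-c) - 1 := sub_pos.2 (one_lt_exp_iff.2 (neg_pos.2 hc))
  filter_upwards [tendsto_sqrt_natCast_atTop.eventually_gt_atTop 1,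
    tendsto_sqrt_natCast_atTop.eventually_ge_atTop (2 / (exp (-c) - 1))] with s h1 h2
  refine ⟨h1, ?_⟩
  rw [exp_neg_sub_log (by linarith)]
  nlinarith [(div_le_iff₀ he).1 h2]

/-- For `c < 0`, the retranslated profiles converge: `d_TV(η^s_{c - ln √s}, ν_s) →
e^{-c}/(1 + e^{-c})` as `s → ∞`. -/
theorem stmt16 (c : ℝ) (hc : c < 0) :
    Filter.Tendsto
      (fun s : ℕ => dTV (etaMeas s (c - Real.log (Real.sqrt s))) (nuMeas s))
      Filter.atTop (nhds (Real.exp (-c) / (1 + Real.exp (-c)))) := by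
  have hinv : Tendsto (fun s : ℕ => (s : ℝ)⁻¹) atTop (𝓝 0) := tendsto_inv_atTop_nhds_zero_nat
  have hlower := (tendsto_etaAtomMass c).comp hinv
  have hupper :=
    hlower.max (tendsto_nuAC_univ_bound.add ((tendsto_densityDefect c).comp hinv))
  rw [zero_add, max_self] at hupper
  refine tendsto_of_tendsto_of_tendsto_of_le_of_le' hlower hupper ?_ ?_ <;>
    filter_upwards [eventually_rescaled_admissible hc] with s ⟨hs, hsc⟩
  · simpa only [Function.comp, atomMass_rescaled (one_pos.trans hs)]
      using atomMass_le_dTV_etaMeas hs hsc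
  · simpa only [Function.comp, atomMass_rescaled (one_pos.trans hs),
      one_sub_fc_rescaled (one_pos.trans hs)] using dTV_etaMeas_le hs hsc
end
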